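/- arXiv:2010.04294 — 5 statements merged into one kernel-verified Lean document; each statement's English description precedes it below -/
import Mathlib

section
/- For independent random variables ξ and ψ, each supported on [0, π/2] with density f(θ) = sin(2θ), the random variable Z = cos²(ξ − ψ) has cumulative distribution function F(z) = z − √(z(1−z))·arcsin(√z) for z ∈ (0,1). -/
/-!
Let `ν` be the common law of `ξ` and `ψ`, supported on `[0, π/2]`, where its distribution
function is `sin²`. For `x, y ∈ [0, π/2]` we have `cos (x - y) ≥ 0`, so with `t = arccos √z`
the event `cos² (x - y) ≤ z` is `|x - y| ≥ t`. By exchangeability it has twice the probability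
of `x - y ≥ t`, which is
`∫ ν(Iic (x - t)) dν(x) = ∫_t^{π/2} sin 2x · sin² (x - t) dx = (1 + cos 2t - (π/2 - t) sin 2t) / 4`,
and `cos t = √z`, `π/2 - t = arcsin √z` turn twice this value into the formula.
-/

open MeasureTheory Real Set

theorem lintegral_Icc_ofReal_eq_sub_of_hasDerivAt {f f' : ℝ → ℝ} {a b : ℝ} (hab : a ≤ b)
    (hderiv : ∀ x ∈ Icc a b, HasDerivAt f (f' x) x) (hcont : ContinuousOn f' (Icc a b))
    (hnonneg : ∀ x ∈ Icc a b, 0 ≤ f' x) :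
    ∫⁻ x in Icc a b, ENNReal.ofReal (f' x) = ENNReal.ofReal (f b - f a) := by
  rw [← ofReal_integral_eq_lintegral_ofReal hcont.integrableOn_Icc
      ((ae_restrict_mem measurableSet_Icc).mono hnonneg),
    integral_Icc_eq_integral_Ioc, ← intervalIntegral.integral_of_le hab,
    intervalIntegral.integral_eq_sub_of_hasDerivAt (by rwa [uIcc_of_le hab])
      (hcont.intervalIntegrable_of_Icc hab)]

theorem MeasureTheory.Measure.prod_self_le_abs_sub_eq_two_mul {ν : Measure ℝ} [SFinite ν]
    {t : ℝ} (ht : 0 < t) :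
    ν.prod ν {p | t ≤ |p.1 - p.2|} = 2 * ν.prod ν {p | t ≤ p.1 - p.2} := by
  have hmeas : MeasurableSet {p : ℝ × ℝ | t ≤ p.1 - p.2} :=
    measurableSet_le (by fun_prop) (by fun_prop)
  have hunion : {p : ℝ × ℝ | t ≤ |p.1 - p.2|}
      = {p | t ≤ p.1 - p.2} ∪ Prod.swap ⁻¹' {p | t ≤ p.1 - p.2} := by
    ext p; simp [le_abs]
  have hdisj : Disjoint {p : ℝ × ℝ | t ≤ p.1 - p.2} (Prod.swap ⁻¹' {p | t ≤ p.1 - p.2}) := by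
    refine disjoint_left.2 fun p h₁ h₂ => ?_
    simp only [mem_ofPred_eq, mem_preimage, Prod.fst_swap, Prod.snd_swap] at h₁ h₂
    linarith
  rw [hunion, measure_union hdisj (measurable_swap hmeas),
    ← Measure.map_apply measurable_swap hmeas, Measure.prod_swap, two_mul]

theorem sin_two_mul_nonneg {x : ℝ} (hx : x ∈ Icc 0 (π / 2)) : 0 ≤ sin (2 * x) :=
  sin_nonneg_of_nonneg_of_le_pi (by linarith [hx.1]) (by linarith [hx.2])

theorem sin_two_mul_mul_sin_sub_sq (x t : ℝ) :
    sin (2 * x) * sin (x - t) ^ 2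
      = sin (2 * x) / 2 - sin (4 * x - 2 * t) / 4 - sin (2 * t) / 4 := by
  obtain ⟨u, rfl⟩ : ∃ u, t = x - u := ⟨x - t, by ring⟩
  rw [show 4 * x - 2 * (x - u) = 2 * x + 2 * u by ring, show x - (x - u) = u by ring,
    show 2 * (x - u) = 2 * x - 2 * u by ring, sin_add, sin_sub, sin_two_mul u, cos_two_mul u]
  linear_combination sin (2 * x) * sin_sq_add_cos_sq u

theorem hasDerivAt_antideriv_sin_two_mul_mul_sin_sub_sq (t x : ℝ) :
    HasDerivAt (fun x => -cos (2 * x) / 4 + cos (4 * x - 2 * t) / 16 - x * sin (2 * t) / 4)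
      (sin (2 * x) * sin (x - t) ^ 2) x := by
  rw [sin_two_mul_mul_sin_sub_sq]
  have h₁ := (hasDerivAt_cos (2 * x)).comp x ((hasDerivAt_id x).const_mul 2)
  have h₂ := (hasDerivAt_cos (4 * x - 2 * t)).comp x
    (((hasDerivAt_id x).const_mul 4).sub_const (2 * t))
  exact (((h₁.neg.div_const 4).add (h₂.div_const 16)).sub
    (((hasDerivAt_id x).mul_const (sin (2 * t))).div_const 4)).congr_deriv (by ring)

theorem cos_sq_le_iff_arccos_sqrt_le_abs {u z : ℝ} (hu : |u| ≤ π / 2) (hz₀ : 0 ≤ z)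
    (hz₁ : z ≤ 1) : cos u ^ 2 ≤ z ↔ arccos √z ≤ |u| := by
  rw [← cos_abs u, ← le_sqrt (cos_nonneg_of_mem_Icc ⟨by linarith [abs_nonneg u], hu⟩) hz₀,
    ← strictAntiOn_cos.le_iff_ge ⟨abs_nonneg u, by linarith [pi_pos]⟩
      ⟨arccos_nonneg _, arccos_le_pi _⟩,
    cos_arccos (by linarith [sqrt_nonneg z]) (sqrt_le_one.2 hz₁)]

theorem one_add_cos_sub_mul_sin_two_mul_arccos_sqrt {z : ℝ} (hz₀ : 0 ≤ z) (hz₁ : z ≤ 1) :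
    (1 + cos (2 * arccos √z) - (π / 2 - arccos √z) * sin (2 * arccos √z)) / 2
      = z - √(z * (1 - z)) * arcsin √z := by
  rw [cos_two_mul, sin_two_mul, cos_arccos (by linarith [sqrt_nonneg z]) (sqrt_le_one.2 hz₁),
    sin_arccos, sq_sqrt hz₀, arccos_eq_pi_div_two_sub_arcsin, sqrt_mul hz₀]
  ring

noncomputable def sinTwoMulMeasure : Measure ℝ :=
  (volume.restrict (Icc 0 (π / 2))).withDensity fun θ => ENNReal.ofReal (sin (2 * θ))

namespace sinTwoMulMeasure

instance : SFinite sinTwoMulMeasure := by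
  unfold sinTwoMulMeasure; infer_instance

theorem restrict_Icc : sinTwoMulMeasure.restrict (Icc 0 (π / 2)) = sinTwoMulMeasure := by
  rw [sinTwoMulMeasure, restrict_withDensity measurableSet_Icc,
    Measure.restrict_restrict_of_subset subset_rfl]

theorem ae_prod_mem :
    ∀ᵐ p ∂sinTwoMulMeasure.prod sinTwoMulMeasure, p ∈ Icc 0 (π / 2) ×ˢ Icc 0 (π / 2) := by
  rw [← restrict_Icc, Measure.prod_restrict]
  exact ae_restrict_mem (measurableSet_Icc.prod measurableSet_Icc)

theorem lintegral_eq {g : ℝ → ENNReal} (hg : Measurable g) :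
    ∫⁻ x, g x ∂sinTwoMulMeasure = ∫⁻ x in Icc 0 (π / 2), ENNReal.ofReal (sin (2 * x)) * g x :=
  lintegral_withDensity_eq_lintegral_mul _ (by fun_prop) hg

theorem apply_Iic {a : ℝ} (ha₀ : 0 ≤ a) (ha : a ≤ π / 2) :
    sinTwoMulMeasure (Iic a) = ENNReal.ofReal (sin a ^ 2) := by
  have hIcc : Iic a ∩ Icc 0 (π / 2) = Icc 0 a := by
    ext x; simp only [mem_inter_iff, mem_Iic, mem_Icc]; grind
  rw [sinTwoMulMeasure, withDensity_apply _ measurableSet_Iic,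
    Measure.restrict_restrict measurableSet_Iic, hIcc,
    lintegral_Icc_ofReal_eq_sub_of_hasDerivAt (f := fun x => sin x ^ 2) ha₀
      (fun x _ => ((hasDerivAt_sin x).pow 2).congr_deriv (by simp [sin_two_mul]))
      (by fun_prop) fun x hx => sin_two_mul_nonneg ⟨hx.1, hx.2.trans ha⟩]
  simp

theorem apply_Iic_of_neg {a : ℝ} (ha : a < 0) : sinTwoMulMeasure (Iic a) = 0 := by
  have hempty : Iic a ∩ Icc 0 (π / 2) = ∅ := by
    ext x; simp only [mem_inter_iff, mem_Iic, mem_Icc, mem_empty_iff_false, iff_false]; grind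
  rw [← restrict_Icc, Measure.restrict_apply measurableSet_Iic, hempty, measure_empty]

theorem prod_apply_le_sub {t : ℝ} (ht₀ : 0 ≤ t) (ht : t ≤ π / 2) :
    sinTwoMulMeasure.prod sinTwoMulMeasure {p | t ≤ p.1 - p.2}
      = ENNReal.ofReal ((1 + cos (2 * t) - (π / 2 - t) * sin (2 * t)) / 4) := by
  have hsection : ∀ x, Prod.mk x ⁻¹' {p : ℝ × ℝ | t ≤ p.1 - p.2} = Iic (x - t) := by
    intro x; ext y; simp [le_sub_comm]
  have hmono : Monotone fun x => sinTwoMulMeasure (Iic (x - t)) :=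
    fun a b hab => measure_mono (Iic_subset_Iic.2 (by linarith))
  rw [Measure.prod_apply (measurableSet_le (by fun_prop) (by fun_prop))]
  simp_rw [hsection]
  rw [lintegral_eq hmono.measurable, ← Ico_union_Icc_eq_Icc ht₀ ht,
    lintegral_union measurableSet_Icc (disjoint_left.2 fun x h₁ h₂ => (not_le.2 h₁.2) h₂.1),
    setLIntegral_congr_fun measurableSet_Ico (g := 0)
      fun x hx => by simp [apply_Iic_of_neg (sub_neg.2 hx.2)],
    setLIntegral_congr_fun measurableSet_Icc
      (g := fun x => ENNReal.ofReal (sin (2 * x) * sin (x - t) ^ 2)) fun x hx => by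
        rw [apply_Iic (by linarith [hx.1]) (by linarith [hx.2]),
          ← ENNReal.ofReal_mul (sin_two_mul_nonneg ⟨by linarith [hx.1], hx.2⟩)],
    lintegral_Icc_ofReal_eq_sub_of_hasDerivAt ht
      (fun x _ => hasDerivAt_antideriv_sin_two_mul_mul_sin_sub_sq t x) (by fun_prop)
      fun x hx => mul_nonneg (sin_two_mul_nonneg ⟨by linarith [hx.1], hx.2⟩) (sq_nonneg _)]
  rw [show 2 * (π / 2) = π by ring, show 4 * (π / 2) - 2 * t = 2 * π - 2 * t by ring,
    show 4 * t - 2 * t = 2 * t by ring, cos_pi, cos_two_pi_sub]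
  simp only [Pi.zero_apply, lintegral_zero, zero_add]
  congr 1; ring

theorem prod_apply_cos_sq_sub_le {z : ℝ} (hz₀ : 0 ≤ z) (hz₁ : z ≤ 1) :
    sinTwoMulMeasure.prod sinTwoMulMeasure {p | cos (p.1 - p.2) ^ 2 ≤ z}
      = sinTwoMulMeasure.prod sinTwoMulMeasure {p | arccos √z ≤ |p.1 - p.2|} := by
  refine measure_congr (Filter.eventuallyEq_set.2 ?_)
  filter_upwards [ae_prod_mem] with p ⟨⟨hx₀, hx₁⟩, hy₀, hy₁⟩
  exact cos_sq_le_iff_arccos_sqrt_le_abs (abs_le.2 ⟨by linarith, by linarith⟩) hz₀ hz₁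

end sinTwoMulMeasure

/-- For i.i.d. ξ, ψ on [0, π/2] with density sin(2θ), the CDF of
Z = cos²(ξ − ψ) is F(z) = z − √(z(1−z))·arcsin(√z) for z ∈ (0,1). -/
theorem cdf_cos_sq_diff
    {Ω : Type*} [MeasurableSpace Ω] (μ : Measure Ω) [IsProbabilityMeasure μ]
    (ξ ψ : Ω → ℝ) (hmξ : Measurable ξ) (hmψ : Measurable ψ)
    (hindep : ProbabilityTheory.IndepFun ξ ψ μ)
    (hξ : μ.map ξ = (volume.restrict (Icc 0 (π/2))).withDensity
      (fun θ => ENNReal.ofReal (Real.sin (2*θ))))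
    (hψ : μ.map ψ = (volume.restrict (Icc 0 (π/2))).withDensity
      (fun θ => ENNReal.ofReal (Real.sin (2*θ)))) :
    ∀ z ∈ Ioo (0:ℝ) 1,
      μ {ω | Real.cos (ξ ω - ψ ω) ^ 2 ≤ z}
        = ENNReal.ofReal (z - Real.sqrt (z*(1-z)) * Real.arcsin (Real.sqrt z)) := by
  rintro z ⟨hz₀, hz₁⟩
  have ht₀ : 0 < arccos √z := arccos_pos.2 (by rw [sqrt_lt' one_pos]; linarith)
  have ht : arccos √z ≤ π / 2 := arccos_le_pi_div_two.2 (sqrt_nonneg z)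
  have hS : MeasurableSet {p : ℝ × ℝ | cos (p.1 - p.2) ^ 2 ≤ z} :=
    measurableSet_le (by fun_prop) measurable_const
  have hlaw : μ.map (fun ω => (ξ ω, ψ ω)) = sinTwoMulMeasure.prod sinTwoMulMeasure := by
    rw [hindep.map_prod_eq_prod_map_map hmξ.aemeasurable hmψ.aemeasurable, hξ, hψ]
    rfl
  calc μ {ω | cos (ξ ω - ψ ω) ^ 2 ≤ z}
      = μ.map (fun ω => (ξ ω, ψ ω)) {p | cos (p.1 - p.2) ^ 2 ≤ z} :=
        (Measure.map_apply (hmξ.prodMk hmψ) hS).symm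
    _ = 2 * sinTwoMulMeasure.prod sinTwoMulMeasure {p | arccos √z ≤ p.1 - p.2} := by
        rw [hlaw, sinTwoMulMeasure.prod_apply_cos_sq_sub_le hz₀.le hz₁.le,
          Measure.prod_self_le_abs_sub_eq_two_mul ht₀]
    _ = ENNReal.ofReal (z - √(z * (1 - z)) * arcsin √z) := by
        rw [sinTwoMulMeasure.prod_apply_le_sub ht₀.le ht, ← ENNReal.ofReal_ofNat 2,
          ← ENNReal.ofReal_mul zero_le_two,
          ← one_add_cos_sub_mul_sin_two_mul_arccos_sqrt hz₀.le hz₁.le]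
        ring_nf
end

section
/- For independent random variables ξ and ψ, each supported on [0, π/2] with density f(θ) = sin(2θ), the random variable Z = sin²(ξ + ψ) has cumulative distribution function F(z) = z − √(z(1−z))·arcsin(√z) for z ∈ (0,1); in particular cos²(ξ−ψ) and sin²(ξ+ψ) have the same distribution. -/
/-! The common law `ν` of `ξ` and `ψ` has distribution function `sin² t` on `[0, π/2]` and is
invariant under `θ ↦ π/2 - θ`. So `ξ + ψ` has law `ν ∗ ν`, carried by `[0, π]` and symmetric
about `π/2`, and `ξ + (π/2 - ψ)`, whose sine is `cos (ξ - ψ)`, has the same law.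
For `z = sin² α` with `0 < α < π/2` the event `sin² (ξ + ψ) ≤ z` is
`{ξ + ψ ≤ α} ∪ {ξ + ψ ≥ π - α}`; both pieces have probability
`∫₀^α sin² (α - x) sin 2x dx = sin² α / 2 - α sin 2α / 4`. -/

open MeasureTheory Real Set

theorem integral_sin_two_mul_eq_sin_sq (t : ℝ) : ∫ x in (0 : ℝ)..t, sin (2 * x) = sin t ^ 2 := by
  simp only [intervalIntegral.integral_comp_mul_left (fun x => sin x) two_ne_zero, integral_sin,
    mul_zero, cos_zero, smul_eq_mul, cos_two_mul]
  linear_combination -(sin_sq_add_cos_sq t)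

theorem integral_sin_sub_sq_mul_sin_two_mul (a : ℝ) :
    ∫ x in (0 : ℝ)..a, sin (a - x) ^ 2 * sin (2 * x) = sin a ^ 2 / 2 - a * sin (2 * a) / 4 := by
  have hderiv : ∀ x ∈ uIcc 0 a,
      HasDerivAt (fun y => -cos (2 * y) / 4 - y * sin (2 * a) / 4 + cos (2 * a - 4 * y) / 16)
        (sin (a - x) ^ 2 * sin (2 * x)) x := by
    intro x _
    -- `sin² (a - x) sin 2x = sin 2x / 2 - sin 2a / 4 + sin (2a - 4x) / 4`
    have h1 := (((hasDerivAt_id x).const_mul 2).cos.neg.div_const 4)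
    have h2 := ((hasDerivAt_id x).mul_const (sin (2 * a))).div_const 4
    have h3 := ((((hasDerivAt_id x).const_mul 4).const_sub (2 * a)).cos.div_const 16)
    refine ((h1.sub h2).add h3).congr_deriv ?_
    simp only [id, sin_sub, sin_two_mul, cos_two_mul,
      show 2 * a - 4 * x = 2 * a - 2 * (2 * x) by ring]
    linear_combination (4 * sin a * cos a * cos x ^ 2 - 2 * cos a ^ 2 * sin x * cos x)
      * sin_sq_add_cos_sq x - 2 * sin x * cos x ^ 3 * sin_sq_add_cos_sq a
  rw [intervalIntegral.integral_eq_sub_of_hasDerivAt hderiv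
    ((by fun_prop : Continuous fun x => sin (a - x) ^ 2 * sin (2 * x)).intervalIntegrable _ _)]
  simp only [show 2 * a - 4 * a = -(2 * a) by ring, cos_neg, mul_zero, sub_zero, cos_zero,
    cos_two_mul, sin_two_mul]
  linear_combination (-1 / 2 : ℝ) * sin_sq_add_cos_sq a

theorem sin_two_mul_nonneg_of_mem_Icc {θ : ℝ} (hθ : θ ∈ Icc 0 (π / 2)) : 0 ≤ sin (2 * θ) :=
  sin_nonneg_of_nonneg_of_le_pi (by linarith [hθ.1]) (by linarith [hθ.2])

theorem sin_le_sin_iff_of_mem_Icc {s α : ℝ} (hs : s ∈ Icc 0 π) (hα : α ∈ Icc 0 (π / 2)) :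
    sin s ≤ sin α ↔ s ≤ α ∨ π - α ≤ s := by
  have hα' : α ∈ Icc (-(π / 2)) (π / 2) := ⟨by linarith [hα.1, pi_pos], hα.2⟩
  rcases le_total s (π / 2) with h | h
  · rw [strictMonoOn_sin.le_iff_le ⟨by linarith [hs.1, pi_pos], h⟩ hα']
    exact ⟨Or.inl, fun h' => h'.elim id fun h' => by linarith [hα.2]⟩
  · rw [← sin_pi_sub s, strictMonoOn_sin.le_iff_le ⟨by linarith [hs.2], by linarith⟩ hα']
    exact ⟨fun h' => Or.inr (by linarith), fun h' => by rcases h' with h' | h' <;> linarith [hα.2]⟩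

theorem MeasureTheory.Measure.map_const_sub_conv {G : Type*} [AddCommGroup G] [MeasurableSpace G]
    [MeasurableAdd₂ G] [MeasurableSub G] (μ ν : Measure G) [SFinite μ] [SFinite ν] (a b : G) :
    (μ ∗ ν).map (fun s => a + b - s) = μ.map (a - ·) ∗ ν.map (b - ·) := by
  rw [Measure.conv, Measure.conv, Measure.map_prod_map _ _ (by fun_prop) (by fun_prop),
    Measure.map_map (by fun_prop) (by fun_prop), Measure.map_map (by fun_prop) (by fun_prop)]
  congr 1
  ext p
  simp only [Function.comp_apply, Prod.map_fst, Prod.map_snd]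
  abel

noncomputable def sinTwoLaw : Measure ℝ :=
  (volume.restrict (Icc 0 (π / 2))).withDensity fun θ => ENNReal.ofReal (sin (2 * θ))

instance : SFinite sinTwoLaw := by
  rw [sinTwoLaw]; infer_instance

theorem lintegral_sinTwoLaw {g : ℝ → ENNReal} (hg : Measurable g) :
    ∫⁻ θ, g θ ∂sinTwoLaw = ∫⁻ θ in Icc 0 (π / 2), ENNReal.ofReal (sin (2 * θ)) * g θ :=
  lintegral_withDensity_eq_lintegral_mul _ (by fun_prop) hg

theorem sinTwoLaw_apply {s : Set ℝ} (hs : MeasurableSet s) :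
    sinTwoLaw s = ∫⁻ θ in s ∩ Icc 0 (π / 2), ENNReal.ofReal (sin (2 * θ)) := by
  rw [sinTwoLaw, withDensity_apply _ hs, Measure.restrict_restrict hs]

theorem sinTwoLaw_Iic {t : ℝ} (h0 : 0 ≤ t) (h1 : t ≤ π / 2) :
    sinTwoLaw (Iic t) = ENNReal.ofReal (sin t ^ 2) := by
  have hI : Iic t ∩ Icc 0 (π / 2) = Icc 0 t := by
    ext θ; simp only [mem_inter_iff, mem_Iic, mem_Icc]; grind
  rw [sinTwoLaw_apply measurableSet_Iic, hI,
    ← ofReal_integral_eq_lintegral_ofReal, integral_Icc_eq_integral_Ioc,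
    ← intervalIntegral.integral_of_le h0, integral_sin_two_mul_eq_sin_sq]
  · exact (by fun_prop : Continuous fun θ => sin (2 * θ)).integrableOn_Icc
  · filter_upwards [ae_restrict_mem measurableSet_Icc] with θ hθ
    exact sin_two_mul_nonneg_of_mem_Icc ⟨hθ.1, hθ.2.trans h1⟩

theorem ae_mem_sinTwoLaw : ∀ᵐ θ ∂sinTwoLaw, θ ∈ Icc 0 (π / 2) :=
  (withDensity_absolutelyContinuous _ _).ae_le (ae_restrict_mem measurableSet_Icc)

theorem sinTwoLaw_Iic_of_neg {t : ℝ} (ht : t < 0) : sinTwoLaw (Iic t) = 0 :=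
  measure_mono_null (t := (Icc 0 (π / 2))ᶜ) (fun θ hθ hθ' => by linarith [hθ.out, hθ'.1])
    (ae_iff.1 ae_mem_sinTwoLaw)

theorem map_sinTwoLaw_reflect : sinTwoLaw.map (π / 2 - ·) = sinTwoLaw := by
  have hm : Measurable fun θ : ℝ => π / 2 - θ := by fun_prop
  have hI : (π / 2 - ·) ⁻¹' Icc 0 (π / 2) = Icc (0 : ℝ) (π / 2) := by
    ext θ; simp only [mem_preimage, mem_Icc]; grind
  have hdensity : (fun θ => ENNReal.ofReal (sin (2 * θ)))
      = fun θ => ENNReal.ofReal (sin (2 * (π / 2 - θ))) := by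
    ext θ; rw [mul_sub, mul_div_cancel₀ _ two_ne_zero, sin_pi_sub]
  ext s hs
  rw [Measure.map_apply hm hs, sinTwoLaw_apply (hm hs), sinTwoLaw_apply hs]
  conv_lhs => rw [← hI, ← preimage_inter, hdensity]
  exact (Measure.measurePreserving_sub_left volume (π / 2)).setLIntegral_comp_preimage
    (hs.inter measurableSet_Icc) (by fun_prop : Measurable fun θ => ENNReal.ofReal (sin (2 * θ)))

theorem ae_mem_sinTwoLaw_conv : ∀ᵐ s ∂(sinTwoLaw ∗ sinTwoLaw), s ∈ Icc 0 π := by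
  rw [Measure.conv, ae_map_iff (p := (· ∈ Icc 0 π)) (by fun_prop) measurableSet_Icc]
  filter_upwards [Measure.quasiMeasurePreserving_fst.ae ae_mem_sinTwoLaw,
    Measure.quasiMeasurePreserving_snd.ae ae_mem_sinTwoLaw] with p h1 h2
  constructor <;> linarith [h1.1, h1.2, h2.1, h2.2]

theorem map_sinTwoLaw_conv_reflect :
    (sinTwoLaw ∗ sinTwoLaw).map (π - ·) = sinTwoLaw ∗ sinTwoLaw := by
  have := Measure.map_const_sub_conv sinTwoLaw sinTwoLaw (π / 2) (π / 2)
  rwa [add_halves, map_sinTwoLaw_reflect] at this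

theorem sinTwoLaw_conv_Iic {α : ℝ} (h0 : 0 ≤ α) (h1 : α ≤ π / 2) :
    (sinTwoLaw ∗ sinTwoLaw) (Iic α) = ENNReal.ofReal (sin α ^ 2 / 2 - α * sin (2 * α) / 4) := by
  have hslice (x : ℝ) : Prod.mk x ⁻¹' ((fun p : ℝ × ℝ => p.1 + p.2) ⁻¹' Iic α) = Iic (α - x) := by
    ext y; simp only [mem_preimage, mem_Iic]; constructor <;> intro h <;> linarith
  have hmeas : Measurable fun x => sinTwoLaw (Iic (α - x)) :=
    Antitone.measurable fun x y hxy => measure_mono (Iic_subset_Iic.mpr (by linarith))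
  rw [Measure.conv, Measure.map_apply (by fun_prop) measurableSet_Iic,
    Measure.prod_apply (measurableSet_Iic.preimage (by fun_prop))]
  simp only [hslice]
  have hleft : EqOn (fun x => ENNReal.ofReal (sin (2 * x)) * sinTwoLaw (Iic (α - x)))
      (fun x => ENNReal.ofReal (sin (α - x) ^ 2 * sin (2 * x))) (Icc 0 α) := fun x hx => by
    dsimp only
    rw [sinTwoLaw_Iic (by linarith [hx.2]) (by linarith [hx.1]), mul_comm,
      ENNReal.ofReal_mul (sq_nonneg _)]
  have hright : EqOn (fun x => ENNReal.ofReal (sin (2 * x)) * sinTwoLaw (Iic (α - x))) 0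
      (Ioc α (π / 2)) := fun x hx => by
    dsimp only
    rw [Pi.zero_apply, sinTwoLaw_Iic_of_neg (by linarith [hx.1]), mul_zero]
  rw [lintegral_sinTwoLaw hmeas, ← Icc_union_Ioc_eq_Icc h0 h1,
    lintegral_union measurableSet_Ioc ((Iic_disjoint_Ioc le_rfl).mono_left Icc_subset_Iic_self),
    setLIntegral_congr_fun measurableSet_Ioc hright, setLIntegral_congr_fun measurableSet_Icc hleft,
    Pi.zero_def, lintegral_zero, add_zero, ← ofReal_integral_eq_lintegral_ofReal,
    integral_Icc_eq_integral_Ioc, ← intervalIntegral.integral_of_le h0,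
    integral_sin_sub_sq_mul_sin_two_mul]
  · exact (by fun_prop : Continuous fun x => sin (α - x) ^ 2 * sin (2 * x)).integrableOn_Icc
  · filter_upwards [ae_restrict_mem measurableSet_Icc] with x hx
    exact mul_nonneg (sq_nonneg _) (sin_two_mul_nonneg_of_mem_Icc ⟨hx.1, hx.2.trans h1⟩)

theorem sinTwoLaw_conv_sin_sq_le_sin_sq {α : ℝ} (h0 : 0 ≤ α) (h1 : α < π / 2) :
    (sinTwoLaw ∗ sinTwoLaw) {s | sin s ^ 2 ≤ sin α ^ 2}
      = ENNReal.ofReal (sin α ^ 2 - α * sin (2 * α) / 2) := by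
  have hsin_α : 0 ≤ sin α := sin_nonneg_of_nonneg_of_le_pi h0 (by linarith [pi_pos])
  have hae : {s | sin s ^ 2 ≤ sin α ^ 2}
      =ᵐ[sinTwoLaw ∗ sinTwoLaw] (Iic α ∪ Ici (π - α) : Set ℝ) := by
    filter_upwards [ae_mem_sinTwoLaw_conv] with s hs
    have hsin_s : 0 ≤ sin s := sin_nonneg_of_nonneg_of_le_pi hs.1 hs.2
    refine propext ?_
    change sin s ^ 2 ≤ sin α ^ 2 ↔ s ≤ α ∨ π - α ≤ s
    rw [pow_le_pow_iff_left₀ hsin_s hsin_α two_ne_zero, sin_le_sin_iff_of_mem_Icc hs ⟨h0, h1.le⟩]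
  have hsymm : (sinTwoLaw ∗ sinTwoLaw) (Ici (π - α)) = (sinTwoLaw ∗ sinTwoLaw) (Iic α) := by
    conv_lhs => rw [← map_sinTwoLaw_conv_reflect]
    rw [Measure.map_apply (by fun_prop) measurableSet_Ici]
    congr 1
    ext s; simp only [mem_preimage, mem_Ici, mem_Iic]; constructor <;> intro h <;> linarith
  rw [measure_congr hae, measure_union (Iic_disjoint_Ici.mpr (by linarith)) measurableSet_Ici,
    hsymm, sinTwoLaw_conv_Iic h0 h1.le, ← two_mul, ← ENNReal.ofReal_ofNat 2,
    ← ENNReal.ofReal_mul zero_le_two]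
  congr 1
  ring

theorem sinTwoLaw_conv_sin_sq_le {z : ℝ} (hz : z ∈ Ioo 0 1) :
    (sinTwoLaw ∗ sinTwoLaw) {s | sin s ^ 2 ≤ z}
      = ENNReal.ofReal (z - √(z * (1 - z)) * arcsin √z) := by
  obtain ⟨hz0, hz1⟩ := hz
  have hsqrt : √z < 1 := (sqrt_lt' one_pos).mpr (by rw [one_pow]; exact hz1)
  set α := arcsin √z with hα
  have hsin : sin α = √z := sin_arcsin (by linarith [sqrt_nonneg z]) hsqrt.le
  have hcos : cos α = √(1 - z) := by rw [hα, cos_arcsin, sq_sqrt hz0.le]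
  have hzα : sin α ^ 2 = z := by rw [hsin, sq_sqrt hz0.le]
  conv_lhs => rw [← hzα]
  rw [sinTwoLaw_conv_sin_sq_le_sin_sq (arcsin_nonneg.mpr (sqrt_nonneg z))
    (arcsin_lt_pi_div_two.mpr hsqrt), hzα, sin_two_mul, hsin, hcos, sqrt_mul hz0.le, hα]
  ring_nf

/-- For i.i.d. ξ, ψ on [0, π/2] with density sin(2θ), the CDF of
Z = sin²(ξ + ψ) is F(z) = z − √(z(1−z))·arcsin(√z) for z ∈ (0,1);
moreover cos²(ξ−ψ) and sin²(ξ+ψ) have the same distribution. -/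
theorem cdf_sin_sq_sum
    {Ω : Type*} [MeasurableSpace Ω] (μ : Measure Ω) [IsProbabilityMeasure μ]
    (ξ ψ : Ω → ℝ) (hmξ : Measurable ξ) (hmψ : Measurable ψ)
    (hindep : ProbabilityTheory.IndepFun ξ ψ μ)
    (hξ : μ.map ξ = (volume.restrict (Icc 0 (π/2))).withDensity
      (fun θ => ENNReal.ofReal (Real.sin (2*θ))))
    (hψ : μ.map ψ = (volume.restrict (Icc 0 (π/2))).withDensity
      (fun θ => ENNReal.ofReal (Real.sin (2*θ)))) :
    (∀ z ∈ Ioo (0:ℝ) 1,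
      μ {ω | Real.sin (ξ ω + ψ ω) ^ 2 ≤ z}
        = ENNReal.ofReal (z - Real.sqrt (z*(1-z)) * Real.arcsin (Real.sqrt z)))
    ∧ μ.map (fun ω => Real.cos (ξ ω - ψ ω) ^ 2)
        = μ.map (fun ω => Real.sin (ξ ω + ψ ω) ^ 2) := by
  change μ.map ξ = sinTwoLaw at hξ
  change μ.map ψ = sinTwoLaw at hψ
  have hψ' : μ.map (fun ω => π / 2 - ψ ω) = sinTwoLaw := by
    rw [← map_sinTwoLaw_reflect, ← hψ, Measure.map_map (by fun_prop) hmψ]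
    rfl
  have hindep' : ProbabilityTheory.IndepFun ξ (fun ω => π / 2 - ψ ω) μ :=
    hindep.comp measurable_id (by fun_prop)
  have hsum : μ.map (ξ + ψ) = sinTwoLaw ∗ sinTwoLaw := by
    rw [hindep.map_add_eq_map_conv_map hmξ hmψ, hξ, hψ]
  have hsum' : μ.map (ξ + fun ω => π / 2 - ψ ω) = sinTwoLaw ∗ sinTwoLaw := by
    rw [hindep'.map_add_eq_map_conv_map hmξ (by fun_prop), hξ, hψ']
  refine ⟨fun z hz => ?_, ?_⟩
  · rw [← sinTwoLaw_conv_sin_sq_le hz, ← hsum,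
      Measure.map_apply (hmξ.add hmψ) (measurableSet_le (by fun_prop) measurable_const)]
    rfl
  · have hcos : (fun ω => cos (ξ ω - ψ ω) ^ 2)
        = (fun s => sin s ^ 2) ∘ (ξ + fun ω => π / 2 - ψ ω) := by
      ext ω
      rw [Function.comp_apply, Pi.add_apply, ← sin_add_pi_div_two]
      ring_nf
    rw [hcos, ← Measure.map_map (by fun_prop) (hmξ.add (by fun_prop)), hsum', ← hsum,
      Measure.map_map (by fun_prop) (hmξ.add hmψ)]
    rfl
end

section
/- If Z is a random variable with CDF F(z) = z − √(z(1−z))·arcsin(√z) on [0,1], then E[Z] = 1/2 + π²/32; consequently the ratio of E[Z] to the mean 1/2 of a uniform [0,1] random variable equals 1 + π²/16. -/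
open MeasureTheory Real Set

/-!
By the layer-cake formula,
`E[Z] = ∫₀¹ (1 - F t) dt = ∫₀¹ (1 - t) dt + ∫₀¹ √(t(1-t)) arcsin √t dt`.
The substitution `t = sin² θ` turns the last integral into
`∫₀^{π/2} θ sin² 2θ / 2 dθ = π² / 32`; its primitive is checked by differentiating in `t`.
The inequality `θ cos θ ≤ sin θ` on `[0, π/2]` gives `F ≥ 0`, so the `ENNReal.ofReal` in the
hypothesis on the CDF loses nothing.
-/

section TailFormula

variable {Ω : Type*} [MeasurableSpace Ω] {μ : Measure Ω} {Z : Ω → ℝ} {b : ℝ}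

lemma measureReal_lt_eq_zero_of_ae_le (hle : ∀ᵐ ω ∂μ, Z ω ≤ b) {t : ℝ} (ht : b < t) :
    μ.real {ω | t < Z ω} = 0 := by
  have hnull : μ {ω | t < Z ω} = 0 :=
    measure_mono_null (fun ω (hω : t < Z ω) (h : Z ω ≤ b) => (ht.trans hω).not_ge h)
      (ae_iff.1 hle)
  rw [measureReal_def, hnull, ENNReal.toReal_zero]

theorem integral_eq_intervalIntegral_one_sub_measureReal_le [IsProbabilityMeasure μ]
    (hZ : Measurable Z) (hrange : ∀ᵐ ω ∂μ, Z ω ∈ Icc 0 b) :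
    ∫ ω, Z ω ∂μ = ∫ t in (0)..b, (1 - μ.real {ω | Z ω ≤ t}) := by
  obtain ⟨ω, hω⟩ := hrange.exists
  have hb : 0 ≤ b := hω.1.trans hω.2
  rw [(Integrable.of_mem_Icc 0 b hZ.aemeasurable hrange).integral_eq_integral_meas_lt
      (by filter_upwards [hrange] with ω h using h.1),
    intervalIntegral.integral_of_le hb,
    setIntegral_eq_of_subset_of_forall_sdiff_eq_zero measurableSet_Ioi Ioc_subset_Ioi_self
      fun t ht => measureReal_lt_eq_zero_of_ae_le (hrange.mono fun _ h => h.2)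
        (not_le.1 fun h => ht.2 ⟨ht.1, h⟩)]
  refine setIntegral_congr_fun measurableSet_Ioc fun t _ => ?_
  rw [← probReal_compl_eq_one_sub (measurableSet_le hZ measurable_const)]
  simp only [compl_ofPred, not_le]

end TailFormula

lemma arcsin_mul_sqrt_one_sub_sq_le {x : ℝ} (hx : 0 ≤ x) : arcsin x * √(1 - x ^ 2) ≤ x := by
  rcases lt_or_ge x 1 with hx1 | hx1
  · have hpos : 0 < √(1 - x ^ 2) := sqrt_pos.2 (by nlinarith)
    have hle := le_tan (arcsin_nonneg.2 hx) (arcsin_lt_pi_div_two.2 hx1)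
    rw [tan_arcsin] at hle
    exact (le_div_iff₀ hpos).1 hle
  · rw [sqrt_eq_zero_of_nonpos (by nlinarith), mul_zero]
    exact hx

lemma sqrt_mul_one_sub_mul_arcsin_sqrt_le {t : ℝ} (ht : 0 ≤ t) :
    √(t * (1 - t)) * arcsin √t ≤ t := by
  have h := arcsin_mul_sqrt_one_sub_sq_le (sqrt_nonneg t)
  rw [sq_sqrt ht] at h
  calc √(t * (1 - t)) * arcsin √t = √t * (arcsin √t * √(1 - t)) := by
        rw [sqrt_mul ht]; ring
    _ ≤ √t * √t := mul_le_mul_of_nonneg_left h (sqrt_nonneg t)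
    _ = t := mul_self_sqrt ht

lemma hasDerivAt_arcsin_sqrt {t : ℝ} (ht0 : 0 < t) (ht1 : t < 1) :
    HasDerivAt (fun t => arcsin √t) (1 / (2 * √(t * (1 - t)))) t := by
  have hsqrt_lt_one : √t < 1 := by simpa using sqrt_lt_sqrt ht0.le ht1
  refine ((hasDerivAt_arcsin (by linarith [sqrt_nonneg t]) hsqrt_lt_one.ne).comp t
    (hasDerivAt_sqrt ht0.ne')).congr_deriv ?_
  rw [sq_sqrt ht0.le, sqrt_mul ht0.le]
  ring

lemma hasDerivAt_sqrt_mul_one_sub {t : ℝ} (ht0 : 0 < t) (ht1 : t < 1) :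
    HasDerivAt (fun t => √(t * (1 - t))) ((1 - 2 * t) / (2 * √(t * (1 - t)))) t := by
  have h := ((hasDerivAt_id' t).mul ((hasDerivAt_id' t).const_sub 1)).sqrt
    (mul_pos ht0 (sub_pos.2 ht1)).ne'
  refine h.congr_deriv ?_
  simp only [Pi.mul_apply]
  ring

/-- With `t = sin² θ` this is `θ² / 8 - θ sin 4θ / 16 + sin² 2θ / 32`, a primitive of
`θ sin² 2θ / 2 = √(t (1 - t)) arcsin √t · dt/dθ`. -/
noncomputable def arcsinSqrtPrimitive (t : ℝ) : ℝ :=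
  arcsin √t ^ 2 / 8 - arcsin √t * √(t * (1 - t)) * (1 - 2 * t) / 4 + t * (1 - t) / 8

lemma hasDerivAt_arcsinSqrtPrimitive {t : ℝ} (ht0 : 0 < t) (ht1 : t < 1) :
    HasDerivAt arcsinSqrtPrimitive (√(t * (1 - t)) * arcsin √t) t := by
  have hθ := hasDerivAt_arcsin_sqrt ht0 ht1
  have hs := hasDerivAt_sqrt_mul_one_sub ht0 ht1
  have hlin : HasDerivAt (fun t : ℝ => 1 - 2 * t) (-2) t := by
    simpa using ((hasDerivAt_id' t).const_mul 2).const_sub 1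
  have hquad : HasDerivAt (fun t : ℝ => t * (1 - t)) (1 - 2 * t) t :=
    ((hasDerivAt_id' t).mul ((hasDerivAt_id' t).const_sub 1)).congr_deriv (by ring)
  refine ((((hθ.pow 2).div_const 8).sub (((hθ.mul hs).mul hlin).div_const 4)).add
    (hquad.div_const 8)).congr_deriv ?_
  have hprod : 0 < t * (1 - t) := mul_pos ht0 (sub_pos.2 ht1)
  have hpos : 0 < √(t * (1 - t)) := sqrt_pos.2 hprod
  have hsq : √(t * (1 - t)) ^ 2 = t * (1 - t) := sq_sqrt hprod.le
  simp only [Pi.mul_apply]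
  field_simp
  linear_combination (-32 * arcsin √t) * hsq

theorem integral_sqrt_mul_one_sub_mul_arcsin_sqrt :
    ∫ t in (0 : ℝ)..1, √(t * (1 - t)) * arcsin √t = π ^ 2 / 32 := by
  rw [intervalIntegral.integral_eq_sub_of_hasDerivAt_of_le zero_le_one
    (by unfold arcsinSqrtPrimitive; fun_prop)
    (fun t ht => hasDerivAt_arcsinSqrtPrimitive ht.1 ht.2)
    (by apply Continuous.intervalIntegrable; fun_prop)]
  simp [arcsinSqrtPrimitive]
  ring

/-- If Z has CDF F(z) = z − √(z(1−z))·arcsin(√z) on [0,1], then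
E[Z] = 1/2 + π²/32, and (E[Z])/(1/2) = 1 + π²/16. -/
theorem mean_of_compensated_cdf
    {Ω : Type*} [MeasurableSpace Ω] (μ : Measure Ω) [IsProbabilityMeasure μ]
    (Z : Ω → ℝ) (hmZ : Measurable Z)
    (hrange : ∀ᵐ ω ∂μ, Z ω ∈ Icc (0:ℝ) 1)
    (hcdf : ∀ z ∈ Icc (0:ℝ) 1,
      μ {ω | Z ω ≤ z}
        = ENNReal.ofReal (z - Real.sqrt (z*(1-z)) * Real.arcsin (Real.sqrt z))) :
    (∫ ω, Z ω ∂μ) = 1/2 + π^2/32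
    ∧ (∫ ω, Z ω ∂μ) / (1/2) = 1 + π^2/16 := by
  have hmean : ∫ ω, Z ω ∂μ = 1/2 + π^2/32 := calc
    ∫ ω, Z ω ∂μ = ∫ t in (0 : ℝ)..1, (1 - μ.real {ω | Z ω ≤ t}) :=
      integral_eq_intervalIntegral_one_sub_measureReal_le hmZ hrange
    _ = ∫ t in (0 : ℝ)..1, ((1 - t) + √(t * (1 - t)) * arcsin √t) := by
      refine intervalIntegral.integral_congr fun t ht => ?_
      rw [uIcc_of_le zero_le_one] at ht
      rw [measureReal_def, hcdf t ht, ENNReal.toReal_ofReal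
        (sub_nonneg.2 (sqrt_mul_one_sub_mul_arcsin_sqrt_le ht.1))]
      ring
    _ = 1/2 + π^2/32 := by
      rw [intervalIntegral.integral_add (by apply Continuous.intervalIntegrable; fun_prop)
        (by apply Continuous.intervalIntegrable; fun_prop),
        integral_sqrt_mul_one_sub_mul_arcsin_sqrt]
      simp [intervalIntegral.integral_comp_sub_left fun x => x]
  exact ⟨hmean, by rw [hmean]; ring⟩
end

section
/- For all z ∈ [0,1], the function F(z) = z − √(z(1−z))·arcsin(√z) satisfies 0 ≤ F(z) ≤ z; i.e., F is dominated by the uniform CDF, so the corresponding random variable stochastically dominates a Uniform(0,1) variable. -/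
open Real Set

/-- For t ∈ [0, π/2], t * cos t ≤ sin t. -/
lemma aux_tcos_le_sin {t : ℝ} (h0 : 0 ≤ t) (h1 : t ≤ π/2) : t * Real.cos t ≤ Real.sin t := by
  rcases eq_or_lt_of_le h0 with rfl | ht0
  · simp
  rcases eq_or_lt_of_le h1 with rfl | ht1
  · simp [Real.sin_pi_div_two, Real.cos_pi_div_two]
  have hc : 0 < Real.cos t := Real.cos_pos_of_mem_Ioo ⟨by linarith [Real.pi_pos], ht1⟩
  have := Real.lt_tan ht0 ht1
  rw [Real.tan_eq_sin_div_cos] at this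
  calc t * Real.cos t ≤ (Real.sin t / Real.cos t) * Real.cos t := by
        apply mul_le_mul_of_nonneg_right this.le hc.le
    _ = Real.sin t := by field_simp

/-- For z ∈ [0,1], 0 ≤ z − √(z(1−z))·arcsin(√z) ≤ z. -/
theorem cdf_dominated_by_uniform :
    ∀ z ∈ Icc (0:ℝ) 1,
      0 ≤ z - Real.sqrt (z*(1-z)) * Real.arcsin (Real.sqrt z)
      ∧ z - Real.sqrt (z*(1-z)) * Real.arcsin (Real.sqrt z) ≤ z := by
  rintro z ⟨hz0, hz1⟩
  set s := Real.sqrt z with hs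
  have hs0 : 0 ≤ s := Real.sqrt_nonneg z
  have hs1 : s ≤ 1 := by
    rw [hs, show (1:ℝ) = Real.sqrt 1 by simp]
    exact Real.sqrt_le_sqrt hz1
  have hssq : s ^ 2 = z := Real.sq_sqrt hz0
  set t := Real.arcsin s with ht
  have ht0 : 0 ≤ t := Real.arcsin_nonneg.mpr hs0
  have ht1 : t ≤ π/2 := Real.arcsin_le_pi_div_two s
  have hsin : Real.sin t = s := Real.sin_arcsin (by linarith) hs1
  have hcos : Real.cos t = Real.sqrt (1 - z) := by
    rw [ht, Real.cos_arcsin, hssq]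
  have hsplit : Real.sqrt (z*(1-z)) = s * Real.sqrt (1 - z) := by
    rw [hs, Real.sqrt_mul hz0]
  have key : Real.sqrt (z*(1-z)) * t ≤ z := by
    rw [hsplit, ← hcos, ← hsin, ← hssq]
    have := aux_tcos_le_sin ht0 ht1
    have hsin0 : 0 ≤ Real.sin t := by rw [hsin]; exact hs0
    nlinarith
  have hnonneg : 0 ≤ Real.sqrt (z*(1-z)) * t :=
    mul_nonneg (Real.sqrt_nonneg _) ht0
  constructor <;> linarith
end

section
/- The function F(z) = z − √(z(1−z))·arcsin(√z) is monotonically nondecreasing on [0,1] with F(0) = 0 and F(1) = 1, hence is a valid cumulative distribution function on [0,1]. -/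
/-!
Substituting z = sin²(u/2) with u ∈ [0, π] turns F into
g(u) = (1 - cos u)/2 - u sin u / 4, whose derivative (sin u - u cos u)/4 is nonnegative on
[0, π] because sin u - u cos u vanishes at 0 and has derivative u sin u ≥ 0 there. Since
z ↦ 2 arcsin √z is monotone and maps [0, 1] onto [0, π], F = g ∘ (2 arcsin √·) is monotone.
-/

open Real Set

namespace Real

theorem sin_sub_mul_cos_nonneg {u : ℝ} (hu₀ : 0 ≤ u) (huπ : u ≤ π) : 0 ≤ sin u - u * cos u := by
  have hmono : MonotoneOn (fun u => sin u - u * cos u) (Icc 0 π) := by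
    refine monotoneOn_of_hasDerivWithinAt_nonneg (f' := fun u => u * sin u) (convex_Icc 0 π)
      (by fun_prop) (fun u _ => ?_) (fun u hu => ?_)
    · refine ((hasDerivAt_sin u).sub ((hasDerivAt_id u).mul (hasDerivAt_cos u))).hasDerivWithinAt
        |>.congr_deriv ?_
      simp only [id]
      ring
    · rw [interior_Icc] at hu
      exact mul_nonneg hu.1.le (sin_nonneg_of_nonneg_of_le_pi hu.1.le hu.2.le)
  simpa using hmono ⟨le_rfl, pi_pos.le⟩ ⟨hu₀, huπ⟩ hu₀

theorem monotoneOn_one_sub_cos_div_two_sub_mul_sin_div_four :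
    MonotoneOn (fun u => (1 - cos u) / 2 - u * sin u / 4) (Icc 0 π) := by
  refine monotoneOn_of_hasDerivWithinAt_nonneg (f' := fun u => (sin u - u * cos u) / 4)
    (convex_Icc 0 π) (by fun_prop) (fun u _ => ?_) (fun u hu => ?_)
  · refine ((((hasDerivAt_const u 1).sub (hasDerivAt_cos u)).div_const 2).sub
      (((hasDerivAt_id u).mul (hasDerivAt_sin u)).div_const 4)).hasDerivWithinAt.congr_deriv ?_
    simp only [id]
    ring
  · rw [interior_Icc] at hu
    exact div_nonneg (sin_sub_mul_cos_nonneg hu.1.le hu.2.le) zero_le_four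

theorem sub_sqrt_mul_arcsin_sqrt_eq {z : ℝ} (hz : z ∈ Icc (0 : ℝ) 1) :
    z - √(z * (1 - z)) * arcsin √z =
      (1 - cos (2 * arcsin √z)) / 2 - 2 * arcsin √z * sin (2 * arcsin √z) / 4 := by
  have hsin : sin (arcsin √z) = √z :=
    sin_arcsin (by linarith [sqrt_nonneg z]) (sqrt_le_one.mpr hz.2)
  have hcos : cos (arcsin √z) = √(1 - z) := by rw [cos_arcsin, sq_sqrt hz.1]
  rw [cos_two_mul, sin_two_mul, hsin, hcos, sqrt_mul hz.1, sq_sqrt (sub_nonneg.mpr hz.2)]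
  ring

end Real

/-- F(z) = z − √(z(1−z))·arcsin(√z) is nondecreasing on [0,1] with
F(0) = 0 and F(1) = 1. -/
theorem cdf_valid :
    MonotoneOn (fun z : ℝ => z - Real.sqrt (z*(1-z)) * Real.arcsin (Real.sqrt z))
      (Icc (0:ℝ) 1)
    ∧ ((0:ℝ) - Real.sqrt (0*(1-0)) * Real.arcsin (Real.sqrt 0)) = 0
    ∧ ((1:ℝ) - Real.sqrt (1*(1-1)) * Real.arcsin (Real.sqrt 1)) = 1 := by
  refine ⟨?_, by norm_num, by norm_num⟩
  have hangle : Monotone fun z => 2 * arcsin √z :=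
    (monotone_arcsin.comp fun _ _ => sqrt_le_sqrt).const_mul zero_le_two
  have hmaps : MapsTo (fun z => 2 * arcsin √z) (Icc 0 1) (Icc 0 π) := fun z _ =>
    ⟨mul_nonneg zero_le_two (arcsin_nonneg.mpr (sqrt_nonneg z)),
      by linarith [arcsin_le_pi_div_two √z]⟩
  exact (monotoneOn_one_sub_cos_div_two_sub_mul_sin_div_four.comp (hangle.monotoneOn _)
    hmaps).congr fun z hz => (sub_sqrt_mul_arcsin_sqrt_eq hz).symm
end
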